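/- Let G be a finite tree (a connected acyclic simple graph on a nonempty finite vertex set) and let h : V → ℕ with h v ≥ 2 for every v. The Latvian game on G (each sage sees exactly its neighbors) is winnable if and only if G has a subgraph T' that is itself a tree (nonempty, connected, and acyclic) such that h v ≤ 2^(deg_{T'} v) for every vertex v of T', where deg_{T'} v is the degree of v in T'. -/

import Mathlib

/-!
If `T'` exists, every sage of `T'` reads her hat as a string of bits, one bit per edge of `T'`
at her vertex. On each edge the two endpoints play the two-sage game in which one guesses that
her bit equals the other's and the other that it differs, so exactly one of them is right on
that edge; a sage who is right on all her edges names her hat. If all sages erred, every vertex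
of `T'` would own an edge on which it is wrong, no edge being owned twice, although `T'` has
fewer edges than vertices.

Conversely, cut off a leaf `l` with neighbour `w`. If `l` has at least three hats, the others
can ignore `l`: each guesses what she would have guessed for all but at most one hat of `l`.
If `l` has two hats, its guess is a function of `w`'s hat; forbidding the hats of `w` on which
`l` guesses its rarer value keeps at least half of them and leaves `l` always wrong. Gluing `l`
back onto the subtree found for the smaller game doubles the admissible hatness of `w`. The
induction ends at a sage with one hat, or at a game without edges, which is lost.
-/

/-- A Czech hat game on the digraph with adjacency `D` (sage `v` sees sage `u`
iff `D v u`), guessness `g`, and hatness `h`, is winnable: there is a strategy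
assigning to each sage `v` a set of `g v` guesses, depending only on the hats
she sees, such that for every coloring some sage guesses her own hat color. -/
def HatGame.Winnable {V : Type*} (D : V → V → Prop) (g h : V → ℕ) : Prop :=
  ∃ F : ∀ v : V, (∀ u : V, Fin (h u)) → Finset (Fin (h v)),
    (∀ (v : V) (c c' : ∀ u : V, Fin (h u)),
        (∀ u : V, D v u → c u = c' u) → F v c = F v c') ∧
    (∀ (v : V) (c : ∀ u : V, Fin (h u)), (F v c).card = g v) ∧
    (∀ c : ∀ u : V, Fin (h u), ∃ v : V, c v ∈ F v c)

open Finset Function SimpleGraph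

theorem Finset.eq_of_card_le_card_filter_eq_add_one {α β : Type*} [DecidableEq β]
    {s : Finset α} {g : α → β} {x y : β} (hs : 2 < #s)
    (hx : #s ≤ #{a ∈ s | g a = x} + 1) (hy : #s ≤ #{a ∈ s | g a = y} + 1) : x = y := by
  classical
  by_contra hxy
  have hdisj : Disjoint {a ∈ s | g a = x} {a ∈ s | g a = y} :=
    disjoint_filter.2 fun _ _ hax hay => hxy (hax.symm.trans hay)
  have := card_le_card (union_subset (filter_subset (g · = x) s) (filter_subset (g · = y) s))
  rw [card_union_of_disjoint hdisj] at this
  omega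

theorem Finset.exists_card_le_two_mul_card_filter_ne {α β : Type*} [DecidableEq β]
    {t : Finset β} (ht : #t = 2) (F : α → β) (s : Finset α) :
    ∃ b ∈ t, #s ≤ 2 * #{x ∈ s | F x ≠ b} := by
  classical
  obtain ⟨b₀, b₁, hb, rfl⟩ := card_eq_two.1 ht
  have hcover : s ⊆ {x ∈ s | F x ≠ b₀} ∪ {x ∈ s | F x ≠ b₁} := fun x hx => by
    by_cases h : F x = b₀ <;> simp_all
  have := (card_le_card hcover).trans (card_union_le _ _)
  rcases le_total #{x ∈ s | F x ≠ b₀} #{x ∈ s | F x ≠ b₁} with h | h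
  · exact ⟨b₁, by simp, by omega⟩
  · exact ⟨b₀, by simp, by omega⟩

theorem exists_injective_domRestrict_zmod_two {α V : Type*} [Fintype α] [Finite V] {s : Set V}
    (h : Fintype.card α ≤ 2 ^ s.ncard) :
    ∃ e : α → V → ZMod 2, Injective fun x => s.domRestrict (e x) := by
  classical
  have := Fintype.ofFinite V
  have : Fintype.card α ≤ Fintype.card (s → ZMod 2) := by
    simpa [Fintype.card_fun, ← Nat.card_coe_set_eq, Nat.card_eq_fintype_card] using h
  obtain ⟨ι⟩ := Embedding.nonempty_of_card_le this
  refine ⟨fun x => extend Subtype.val (ι x) 0, fun x y hxy => ι.injective ?_⟩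
  simpa only [Set.domRestrict_eq, extend_comp Subtype.val_injective] using hxy

namespace SimpleGraph

variable {W : Type*} {H : SimpleGraph W}

theorem IsAcyclic.exists_adj_forall_adj_eq [Finite W] (hH : H.IsAcyclic) {a b : W}
    (hab : H.Adj a b) : ∃ l w, H.Adj l w ∧ ∀ u, H.Adj l u → u = w := by
  have : Nonempty W := ⟨a⟩
  obtain ⟨u, v, p, hp, hmax⟩ := Walk.exists_isPath_forall_isPath_length_le_length H
  have hnil : ¬ p.Nil := fun hnil => by
    simpa [Walk.length_eq_zero_iff.2 hnil] using hmax _ _ hab.toWalk (by simp [hab.ne])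
  refine ⟨u, p.snd, p.adj_snd hnil, fun x hx => hH.eq_snd_of_adj_start hp hx ?_⟩
  by_contra hxp
  simpa using hmax _ _ (p.cons hx.symm) (hp.cons hxp)

theorem IsTree.exists_apply_apply_eq [Finite W] (hH : H.IsTree) (p : W → W)
    (hp : ∀ v, H.Adj v (p v)) : ∃ v, p (p v) = v := by
  classical
  have := Fintype.ofFinite W
  by_contra! hne
  have hinj : Injective fun v => (⟨s(v, p v), hp v⟩ : H.edgeSet) := by
    intro a b hab
    rcases Sym2.eq_iff.1 (Subtype.ext_iff.1 hab) with ⟨h, -⟩ | ⟨h₁, h₂⟩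
    · exact h
    · exact absurd (h₁ ▸ h₂) (hne b)
  have := Fintype.card_le_of_injective _ hinj
  have := hH.card_edgeFinset
  rw [← edgeFinset_card] at *
  omega

end SimpleGraph

namespace HatGame

variable {V : Type*} {C : V → Type*}

/- Hats of sage `u` are restricted to `A u`, guesses are not: this is the Latvian game in which
`u` has `#(A u)` hats. -/
def LatvianWinnable (D : V → V → Prop) (A : ∀ u, Finset (C u)) : Prop :=
  ∃ f : ∀ v, (∀ u, C u) → C v,
    (∀ v c c', (∀ u, D v u → c u = c' u) → f v c = f v c') ∧
    ∀ c : ∀ u, C u, (∀ u, c u ∈ A u) → ∃ v, f v c = c v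

theorem winnable_one_iff_latvianWinnable {D : V → V → Prop} {h : V → ℕ} :
    Winnable D (fun _ => 1) h ↔ LatvianWinnable D fun u => (univ : Finset (Fin (h u))) := by
  constructor
  · rintro ⟨F, hdep, hcard, hwin⟩
    choose f hf using fun v c => card_eq_one.1 (hcard v c)
    refine ⟨f, fun v c c' hcc => ?_, fun c _ => ?_⟩
    · simpa [hf] using hdep v c c' hcc
    · obtain ⟨v, hv⟩ := hwin c
      exact ⟨v, by simpa [hf, eq_comm] using hv⟩
  · rintro ⟨f, hdep, hwin⟩
    refine ⟨fun v c => {f v c}, fun v c c' hcc => congrArg _ (hdep v c c' hcc),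
      fun _ _ => card_singleton _, fun c => ?_⟩
    obtain ⟨v, hv⟩ := hwin c fun _ => mem_univ _
    exact ⟨v, mem_singleton.2 hv.symm⟩

theorem not_latvianWinnable_of_forall_not_adj {D : V → V → Prop} {A : ∀ u, Finset (C u)}
    (hD : ∀ v u, ¬ D v u) (hA : ∀ u, 2 ≤ #(A u)) : ¬ LatvianWinnable D A := by
  classical
  rintro ⟨f, hdep, hwin⟩
  choose c₀ hc₀ using fun u => card_pos.1 (by have := hA u; omega : 0 < #(A u))
  have hconst : ∀ v c, f v c = f v c₀ := fun v c => hdep v c c₀ fun u hu => (hD v u hu).elim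
  choose c hc using fun u => card_pos.1
    (by have := hA u; have := pred_card_le_card_erase (s := A u) (a := f u c₀); omega :
      0 < #((A u).erase (f u c₀)))
  obtain ⟨v, hv⟩ := hwin c fun u => mem_of_mem_erase (hc u)
  exact ne_of_mem_erase (hc v) (hv ▸ hconst v c)

section Leaf

variable [∀ u, Nonempty (C u)] {D D' : V → V → Prop} {A : ∀ u, Finset (C u)} {l w : V}

theorem LatvianWinnable.delete_leaf_of_card_eq_two [DecidableEq V] (H : LatvianWinnable D A)
    (hlw : l ≠ w) (hsee : ∀ u, D l u → u = w)
    (hD' : ∀ u v, D u v → u ≠ l → v ≠ l → D' u v) (hl : #(A l) = 2) :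
    ∃ S, #(A w) ≤ 2 * #S ∧ LatvianWinnable D' (update A w S) := by
  classical
  obtain ⟨f, hdep, hwin⟩ := H
  let F : C w → C l := fun x => f l (update (fun _ => Classical.arbitrary _) w x)
  have hF : ∀ c, f l c = F (c w) := fun c => hdep l _ _ fun u hu => by
    obtain rfl := hsee u hu
    simp
  obtain ⟨b, hb, hS⟩ := exists_card_le_two_mul_card_filter_ne hl F (A w)
  -- fix `l`'s hat to `b` and forbid the hats of `w` on which `l` would guess `b`
  refine ⟨{x ∈ A w | F x ≠ b}, hS,
    fun v c => if v = l then Classical.arbitrary _ else f v (update c l b), ?_, fun c hc => ?_⟩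
  · intro v c c' hcc
    dsimp only
    split_ifs with hvl
    · rfl
    refine hdep v _ _ fun u hu => ?_
    rcases eq_or_ne u l with rfl | hul
    · simp
    · simp only [update_of_ne hul]
      exact hcc u (hD' v u hu hvl hul)
  · have hcw : c w ∈ A w ∧ F (c w) ≠ b := by simpa using hc w
    obtain ⟨v, hv⟩ := hwin (update c l b) <| (forall_update_iff c (fun u x => x ∈ A u)).2
      ⟨hb, fun u _ => by
        rcases eq_or_ne u w with rfl | huw
        exacts [hcw.1, by simpa [huw] using hc u]⟩
    have hvl : v ≠ l := by
      rintro rfl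
      rw [hF, update_self, update_of_ne hlw.symm] at hv
      exact hcw.2 hv
    exact ⟨v, by simpa [hvl] using hv⟩

theorem LatvianWinnable.delete_leaf_of_two_lt_card (H : LatvianWinnable D A) (hlw : l ≠ w)
    (hsee : ∀ u, D l u → u = w) (hseen : ∀ u, D u l → u = w)
    (hD' : ∀ u v, D u v → u ≠ l → v ≠ l → D' u v) (hl : 2 < #(A l)) :
    LatvianWinnable D' A := by
  classical
  obtain ⟨f, hdep, hwin⟩ := H
  -- every sage but `l` guesses the value her old guess takes for all but at most one hat of `l`
  let IsMajority (v : V) (c : ∀ u, C u) (x : C v) : Prop :=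
    #(A l) ≤ #{a ∈ A l | f v (update c l a) = x} + 1
  refine ⟨fun v c => if v = l then Classical.arbitrary _ else Classical.epsilon (IsMajority v c),
    ?_, fun c hc => ?_⟩
  · intro v c c' hcc
    dsimp only
    split_ifs with hvl
    · rfl
    have : ∀ a, f v (update c l a) = f v (update c' l a) := fun a => hdep v _ _ fun u hu => by
      rcases eq_or_ne u l with rfl | hul
      · simp
      · simp only [update_of_ne hul]
        exact hcc u (hD' v u hu hvl hul)
    simp only [IsMajority, this]
  have hfl : ∀ a, f l (update c l a) = f l c := fun a => hdep l _ _ fun u hu => by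
    obtain rfl := hsee u hu
    exact update_of_ne hlw.symm _ _
  have hwinner : ∀ a ∈ (A l).erase (f l c), ∃ v ≠ l, f v (update c l a) = c v := by
    intro a ha
    obtain ⟨v, hv⟩ := hwin (update c l a) <| (forall_update_iff c (fun u x => x ∈ A u)).2
      ⟨mem_of_mem_erase ha, fun u _ => hc u⟩
    have hvl : v ≠ l := by
      rintro rfl
      rw [hfl, update_self] at hv
      exact ne_of_mem_erase ha hv.symm
    exact ⟨v, hvl, by simpa [hvl] using hv⟩
  obtain ⟨v, hvl, hv⟩ : ∃ v ≠ l, IsMajority v c (c v) := by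
    have hcard := pred_card_le_card_erase (s := A l) (a := f l c)
    by_cases hw : ∀ a ∈ (A l).erase (f l c), f w (update c l a) = c w
    · refine ⟨w, hlw.symm, ?_⟩
      have : (A l).erase (f l c) ⊆ {a ∈ A l | f w (update c l a) = c w} := fun a ha =>
        mem_filter.2 ⟨mem_of_mem_erase ha, hw a ha⟩
      have := card_le_card this
      omega
    · push Not at hw
      obtain ⟨a, ha, haw⟩ := hw
      obtain ⟨v, hvl, hv⟩ := hwinner a ha
      have hvw : v ≠ w := by
        rintro rfl
        exact haw hv
      -- a winner other than `w` does not see `l`, so she wins whatever `l` wears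
      have hall : {a' ∈ A l | f v (update c l a') = c v} = A l :=
        filter_true_of_mem fun a' _ => by
          rw [← hv]
          refine hdep v _ _ fun u hu => ?_
          have hul : u ≠ l := by
            rintro rfl
            exact hvw (hseen v hu)
          simp only [update_of_ne hul]
      exact ⟨v, hvl, by simp only [IsMajority, hall]; omega⟩
  refine ⟨v, ?_⟩
  simp only [if_neg hvl]
  exact eq_of_card_le_card_filter_eq_add_one hl (Classical.epsilon_spec ⟨_, hv⟩) hv

end Leaf

theorem latvianWinnable_of_isTree [Finite V] [∀ u, Fintype (C u)] [∀ u, Nonempty (C u)]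
    {G : SimpleGraph V} (T : G.Subgraph) (hT : T.coe.IsTree)
    (hC : ∀ v ∈ T.verts, Fintype.card (C v) ≤ 2 ^ (T.neighborSet v).ncard) :
    LatvianWinnable G.Adj fun u => (univ : Finset (C u)) := by
  classical
  let _ : LinearOrder V := IsWellOrder.linearOrder WellOrderingRel
  have : ∀ v, ∃ e : C v → V → ZMod 2,
      v ∈ T.verts → Injective fun x => (T.neighborSet v).domRestrict (e x) := fun v =>
    if hv : v ∈ T.verts then
      (exists_injective_domRestrict_zmod_two (hC v hv)).imp fun _ he _ => he
    else ⟨0, fun h => (hv h).elim⟩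
  choose e he using this
  -- on the edge `vu`, sage `v` predicts her bit to be `u`'s bit plus `ε v u`; as
  -- `ε v u + ε u v = 1`, exactly one of the two predictions on an edge is right
  let ε : V → V → ZMod 2 := fun v u => if v < u then 1 else 0
  let Predicts (v : V) (c : ∀ u, C u) (x : C v) : Prop :=
    ∀ u ∈ T.neighborSet v, e v x u = e u (c u) v + ε v u
  refine ⟨fun v c => Classical.epsilon (Predicts v c), fun v c c' hcc => ?_, fun c _ => ?_⟩
  · have : Predicts v c = Predicts v c' := by
      ext x
      refine forall₂_congr fun u hu => ?_
      rw [hcc u (T.adj_sub hu)]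
    simp only [this]
  by_contra! hlose
  have hbad : ∀ v : T.verts, ∃ u : T.verts,
      T.coe.Adj v u ∧ e v (c v) u ≠ e u (c u) v + ε v u := by
    intro v
    by_contra! hgood
    have hpred : Predicts v c (c v) := fun u hu => hgood ⟨u, T.neighborSet_subset_verts v hu⟩ hu
    refine hlose v (he v v.2 ?_)
    ext ⟨u, hu⟩
    exact ((Classical.epsilon_spec ⟨_, hpred⟩ : Predicts v c _) u hu).trans (hpred u hu).symm
  choose p hp hp' using hbad
  obtain ⟨v, hv⟩ := hT.exists_apply_apply_eq p hp
  have hε : ε v (p v) + ε (p v) v = 1 := by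
    have hne : (v : V) ≠ p v := fun h => (hp v).ne (Subtype.ext h)
    rcases lt_or_gt_of_ne hne with h | h <;> simp [ε, h, h.not_gt]
  have hbad₁ := hp' v
  have hbad₂ := hp' (p v)
  rw [hv] at hbad₂
  exact (by decide : ∀ a b s t : ZMod 2, s + t = 1 → a ≠ b + s → b ≠ a + t → False)
    _ _ _ _ hε hbad₁ hbad₂

theorem exists_connected_subgraph_of_attach_leaf [Finite V] [DecidableEq V]
    {G H : SimpleGraph V} {A : ∀ u, Finset (C u)} {l w : V} {S : Finset (C w)}
    (hHG : H ≤ G) (hlw : H.Adj l w) (hleaf : ∀ u, H.Adj l u → u = w)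
    (hl : #(A l) = 2) (hS : #(A w) ≤ 2 * #S) {T : G.Subgraph}
    (hTH : T.spanningCoe ≤ H.deleteEdges {s(l, w)}) (hT : T.Connected)
    (hTA : ∀ v ∈ T.verts, #(update A w S v) ≤ 2 ^ (T.neighborSet v).ncard) :
    ∃ T' : G.Subgraph, T'.spanningCoe ≤ H ∧ T'.Connected ∧
      ∀ v ∈ T'.verts, #(A v) ≤ 2 ^ (T'.neighborSet v).ncard := by
  have hTH' : T.spanningCoe ≤ H := hTH.trans (deleteEdges_le _)
  have hTl : T.neighborSet l = ∅ := Set.eq_empty_of_forall_notMem fun u hu => by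
    have := deleteEdges_adj.1 (hTH hu)
    obtain rfl := hleaf u this.1
    exact this.2 rfl
  -- a vertex of `T` without neighbours must carry at most one hat
  have hlT : l ∉ T.verts := fun hlT => by
    simpa [update_of_ne hlw.ne, hl, hTl] using hTA l hlT
  by_cases hwT : w ∈ T.verts
  swap
  · exact ⟨T, hTH', hT, fun v hv => by
      simpa [update_of_ne (ne_of_mem_of_not_mem hv hwT)] using hTA v hv⟩
  refine ⟨T ⊔ G.subgraphOfAdj (hHG hlw), fun a b hab => ?_, Subgraph.connected_sup
    hT.preconnected (Subgraph.subgraphOfAdj_connected _).preconnected ⟨w, hwT, by simp⟩,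
    fun v hv => ?_⟩
  · rcases hab with hab | hab
    · exact hTH' hab
    · rw [subgraphOfAdj_adj, Sym2.eq_iff] at hab
      rcases hab with ⟨rfl, rfl⟩ | ⟨rfl, rfl⟩
      exacts [hlw, hlw.symm]
  rw [Subgraph.neighborSet_sup]
  by_cases hvl : v = l
  · subst hvl
    simp [hTl, neighborSet_fst_subgraphOfAdj, hl]
  by_cases hvw : v = w
  · subst hvw
    have hlv : l ∉ T.neighborSet v := fun h => hlT (T.neighborSet_subset_verts v h)
    rw [neighborSet_snd_subgraphOfAdj, Set.union_singleton, Set.ncard_insert_of_notMem hlv,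
      pow_succ]
    have := hTA v hwT
    simp only [update_self] at this
    omega
  have hvT : v ∈ T.verts := by simpa [hvl, hvw] using hv
  simpa [neighborSet_subgraphOfAdj_of_ne_of_ne _ hvl hvw, update_of_ne hvw] using hTA v hvT

theorem exists_connected_subgraph_of_latvianWinnable [Finite V] [∀ u, Nonempty (C u)]
    {G H : SimpleGraph V} (hH : H.IsAcyclic) (hHG : H ≤ G) {A : ∀ u, Finset (C u)}
    (hwin : LatvianWinnable H.Adj A) :
    ∃ T : G.Subgraph, T.spanningCoe ≤ H ∧ T.Connected ∧
      ∀ v ∈ T.verts, #(A v) ≤ 2 ^ (T.neighborSet v).ncard := by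
  classical
  induction H using WellFoundedLT.induction generalizing A with
  | _ H ih =>
  by_cases hsmall : ∃ v, #(A v) ≤ 1
  · obtain ⟨v, hv⟩ := hsmall
    refine ⟨G.singletonSubgraph v, fun a b hab => by simp at hab,
      Subgraph.singletonSubgraph_connected, fun u hu => ?_⟩
    obtain rfl : u = v := hu
    simpa using hv
  push Not at hsmall
  by_cases hedge : ∃ a b, H.Adj a b
  swap
  · push Not at hedge
    exact absurd hwin (not_latvianWinnable_of_forall_not_adj hedge hsmall)
  obtain ⟨a, b, hab⟩ := hedge
  obtain ⟨l, w, hlw, hleaf⟩ := hH.exists_adj_forall_adj_eq hab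
  set H' := H.deleteEdges {s(l, w)}
  have hlt : H' < H := lt_of_le_of_ne (deleteEdges_le _) fun h =>
    (deleteEdges_adj.1 (h ▸ hlw : H'.Adj l w)).2 rfl
  have hD' : ∀ u v, H.Adj u v → u ≠ l → v ≠ l → H'.Adj u v := fun u v huv hul hvl =>
    deleteEdges_adj.2 ⟨huv, by simp [hul, hvl]⟩
  have ih' := fun {A'} => ih H' hlt (hH.anti hlt.le) (hlt.le.trans hHG) (A := A')
  rcases (show 2 ≤ #(A l) from hsmall l).eq_or_lt with hl | hl
  · obtain ⟨S, hS, hwin'⟩ := hwin.delete_leaf_of_card_eq_two hlw.ne hleaf hD' hl.symm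
    obtain ⟨T, hTH, hT, hTA⟩ := ih' hwin'
    exact exists_connected_subgraph_of_attach_leaf hHG hlw hleaf hl.symm hS hTH hT hTA
  · obtain ⟨T, hTH, hT, hTA⟩ :=
      ih' (hwin.delete_leaf_of_two_lt_card hlw.ne hleaf (fun u hu => hleaf u hu.symm) hD' hl)
    exact ⟨T, hTH.trans hlt.le, hT, hTA⟩

end HatGame

theorem latvian_tree_winnable_iff {V : Type*} [Fintype V]
    (G : SimpleGraph V) (hG : G.IsTree) (h : V → ℕ) (hh : ∀ v, 2 ≤ h v) :
    HatGame.Winnable G.Adj (fun _ => 1) h ↔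
      ∃ T' : G.Subgraph, T'.coe.IsTree ∧
        ∀ v ∈ T'.verts, h v ≤ 2 ^ (T'.neighborSet v).ncard := by
  have : ∀ v, Nonempty (Fin (h v)) := fun v => Fin.pos_iff_nonempty.1 (by linarith [hh v])
  rw [HatGame.winnable_one_iff_latvianWinnable]
  constructor
  · intro hwin
    obtain ⟨T', -, hT', hbound⟩ :=
      HatGame.exists_connected_subgraph_of_latvianWinnable hG.isAcyclic le_rfl hwin
    exact ⟨T', ⟨hT'.coe, hG.isAcyclic.subgraph T'⟩, by simpa using hbound⟩
  · rintro ⟨T', hT', hbound⟩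
    exact HatGame.latvianWinnable_of_isTree T' hT' (by simpa using hbound)
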